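/- Let 0 ≤ β < Q and s ∈ [Q, ∞). If {u_k} is a sequence of measurable functions on ℍⁿ and u ∈ L^q(ℍⁿ) for all q ∈ [Q,∞) are such that u_k → u strongly in L^q(ℍⁿ) for every q ∈ [Q, ∞), then ∫_{ℍⁿ} |u_k − u|^s ρ(ξ)^{−β} dξ → 0 as k → ∞. -/

import Mathlib

open MeasureTheory Filter Topology

noncomputable section

namespace Heisenberg

/-- The underlying space of the Heisenberg group `ℍⁿ = ℂⁿ × ℝ = ℝ^{2n+1}`. -/
abbrev H (n : ℕ) : Type := Fin (2 * n + 1) → ℝ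

/-- The homogeneous dimension `Q = 2n+2`. -/
def Qdim (n : ℕ) : ℕ := 2 * n + 2

/-- Index of the coordinate `x_i`. -/
def coordX (n : ℕ) (i : Fin n) : Fin (2 * n + 1) := ⟨(i : ℕ), by have := i.isLt; omega⟩

/-- Index of the coordinate `y_i`. -/
def coordY (n : ℕ) (i : Fin n) : Fin (2 * n + 1) := ⟨n + (i : ℕ), by have := i.isLt; omega⟩

/-- Index of the coordinate `t`. -/
def coordT (n : ℕ) : Fin (2 * n + 1) := ⟨2 * n, by omega⟩

/-- Squared Euclidean norm `|z|²` of the `ℂⁿ`-component of `ξ`. -/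
def zNormSq {n : ℕ} (ξ : H n) : ℝ :=
  ∑ i : Fin n, ((ξ (coordX n i)) ^ 2 + (ξ (coordY n i)) ^ 2)

/-- The homogeneous norm `ρ(ξ) = (|z|⁴ + t²)^{1/4}`. -/
def ρ {n : ℕ} (ξ : H n) : ℝ :=
  ((zNormSq ξ) ^ 2 + (ξ (coordT n)) ^ 2) ^ ((1 : ℝ) / 4)

/-- The direction of the `j`-th horizontal vector field at `ξ`:
`X_j = ∂_{x_j} + 2 y_j ∂_t` for `j < n`, and `Y_{j-n} = ∂_{y_{j-n}} - 2 x_{j-n} ∂_t`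
for `n ≤ j < 2n`. -/
def hVec (n : ℕ) (j : Fin (2 * n)) (ξ : H n) : H n :=
  if h : (j : ℕ) < n then
    (Pi.single (coordX n ⟨j, h⟩) 1 : H n) +
      (2 * ξ (coordY n ⟨j, h⟩)) • (Pi.single (coordT n) 1 : H n)
  else
    (Pi.single (coordY n ⟨(j : ℕ) - n, by have := j.isLt; omega⟩) 1 : H n) +
      (-2 * ξ (coordX n ⟨(j : ℕ) - n, by have := j.isLt; omega⟩)) • (Pi.single (coordT n) 1 : H n)

/-- Euclidean length of a horizontal vector. -/
def vnorm {m : ℕ} (v : Fin m → ℝ) : ℝ := Real.sqrt (∑ j, (v j) ^ 2)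

/-- Pointwise horizontal gradient `∇_H u = (X₁u, …, Xₙu, Y₁u, …, Yₙu)` of a
(differentiable) function. -/
def hGrad (n : ℕ) (u : H n → ℝ) (ξ : H n) : Fin (2 * n) → ℝ :=
  fun j => fderiv ℝ u ξ (hVec n j ξ)

/-- `g` is the distributional horizontal gradient of `u` (each horizontal field `X_j`
is divergence free, so no boundary term appears in the integration by parts). -/
def IsHGrad (n : ℕ) (u : H n → ℝ) (g : H n → Fin (2 * n) → ℝ) : Prop :=
  LocallyIntegrable u volume ∧ (∀ j, LocallyIntegrable (fun ξ => g ξ j) volume) ∧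
    ∀ φ : H n → ℝ, ContDiff ℝ (⊤ : ℕ∞) φ → HasCompactSupport φ → ∀ j : Fin (2 * n),
      ∫ ξ, u ξ * fderiv ℝ φ ξ (hVec n j ξ) = - ∫ ξ, g ξ j * φ ξ

/-- Membership in the horizontal Sobolev space `HW^{1,Q}(ℍⁿ)`, with weak horizontal
gradient `g`. -/
def MemHW (n Q : ℕ) (u : H n → ℝ) (g : H n → Fin (2 * n) → ℝ) : Prop :=
  IsHGrad n u g ∧ MemLp u Q volume ∧ MemLp (fun ξ => vnorm (g ξ)) Q volume

/-- Membership in `HW₀^{1,Q}(Ω)` (functions are viewed as defined on all of `ℍⁿ`,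
extended by zero): member of `HW^{1,Q}`, vanishing a.e. outside `Ω`, and approximable in
the Sobolev norm by smooth functions compactly supported in `Ω`. -/
def MemHW0 (n Q : ℕ) (Ω : Set (H n)) (u : H n → ℝ) (g : H n → Fin (2 * n) → ℝ) : Prop :=
  MemHW n Q u g ∧ (∀ᵐ ξ ∂(volume : Measure (H n)), ξ ∉ Ω → u ξ = 0) ∧
    ∃ φ : ℕ → H n → ℝ,
      (∀ k, ContDiff ℝ (⊤ : ℕ∞) (φ k) ∧ HasCompactSupport (φ k) ∧ tsupport (φ k) ⊆ Ω) ∧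
      Tendsto (fun k => ∫ ξ, (vnorm (fun j => hGrad n (φ k) ξ j - g ξ j)) ^ Q +
        |φ k ξ - u ξ| ^ Q) atTop (𝓝 0)

/-- Weak convergence `u_k ⇀ u₀` in `HW^{1,Q}`, expressed through the convergence of the
pairings of the functions and of their horizontal gradients with `L^{Q'}` functions,
`Q' = Q/(Q-1)`. -/
def WeakConvHW (n Q : ℕ) (u : ℕ → H n → ℝ) (g : ℕ → H n → Fin (2 * n) → ℝ)
    (u₀ : H n → ℝ) (g₀ : H n → Fin (2 * n) → ℝ) : Prop :=
  ∀ v : H n → ℝ, MemLp v (ENNReal.ofReal ((Q : ℝ) / ((Q : ℝ) - 1))) volume →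
    Tendsto (fun k => ∫ ξ, u k ξ * v ξ) atTop (𝓝 (∫ ξ, u₀ ξ * v ξ)) ∧
    ∀ j, Tendsto (fun k => ∫ ξ, g k ξ j * v ξ) atTop (𝓝 (∫ ξ, g₀ ξ j * v ξ))

/-- The sharp Trudinger–Moser constant
`α_Q = Q (2πⁿ Γ(1/2) Γ((Q−1)/2) Γ(Q/2)⁻¹ Γ(n)⁻¹)^{1/(Q−1)}`. -/
def alphaQ (n : ℕ) : ℝ :=
  (Qdim n : ℝ) * (2 * Real.pi ^ n * Real.Gamma (1 / 2) *
    Real.Gamma (((Qdim n : ℝ) - 1) / 2) * (Real.Gamma ((Qdim n : ℝ) / 2))⁻¹ *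
    (Real.Gamma (n : ℝ))⁻¹) ^ ((1 : ℝ) / ((Qdim n : ℝ) - 1))

/-- The singular sharp constant `α_{Q,β} = α_Q (1 − β/Q)`. -/
def alphaQbeta (n : ℕ) (β : ℝ) : ℝ := alphaQ n * (1 - β / (Qdim n : ℝ))

/-- The truncated exponential `Φ(t) = e^t − ∑_{j=0}^{Q−2} t^j/j!`. -/
def Phi (Q : ℕ) (t : ℝ) : ℝ :=
  Real.exp t - ∑ j ∈ Finset.range (Q - 1), t ^ j / (Nat.factorial j)

/-- The Trudinger–Moser exponent `Q/(Q−1)`. -/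
def expQ (Q : ℕ) : ℝ := (Q : ℝ) / ((Q : ℝ) - 1)

open scoped ENNReal

/-! ### Auxiliary lemmas -/

section Aux

variable {n : ℕ}

lemma rho_nonneg (ξ : H n) : 0 ≤ ρ ξ := Real.rpow_nonneg (by positivity) _

lemma rho_pow_four (ξ : H n) : ρ ξ ^ (4 : ℕ) = zNormSq ξ ^ 2 + ξ (coordT n) ^ 2 := by
  rw [ρ, ← Real.rpow_natCast ((zNormSq ξ ^ 2 + ξ (coordT n) ^ 2) ^ ((1:ℝ)/4)) 4,
    ← Real.rpow_mul (by positivity)]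
  norm_num

lemma zNormSq_nonneg (ξ : H n) : 0 ≤ zNormSq ξ :=
  Finset.sum_nonneg fun i _ => by positivity

lemma zNormSq_le (ξ : H n) : zNormSq ξ ≤ ρ ξ ^ 2 := by
  have h4 := rho_pow_four ξ
  have h0 := zNormSq_nonneg ξ
  have hρ := rho_nonneg ξ
  nlinarith [sq_nonneg (ξ (coordT n)), sq_nonneg (zNormSq ξ + ρ ξ ^ 2),
    sq_nonneg (zNormSq ξ - ρ ξ ^ 2)]

lemma abs_t_le (ξ : H n) : |ξ (coordT n)| ≤ ρ ξ ^ 2 := by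
  have h4 := rho_pow_four ξ
  have h0 := zNormSq_nonneg ξ
  have hρ := rho_nonneg ξ
  have ha := abs_nonneg (ξ (coordT n))
  nlinarith [sq_abs (ξ (coordT n)), sq_nonneg (|ξ (coordT n)| + ρ ξ ^ 2),
    sq_nonneg (|ξ (coordT n)| - ρ ξ ^ 2), sq_nonneg (zNormSq ξ)]

lemma coord_sq_le (ξ : H n) (i : Fin (2 * n + 1)) (hi : (i : ℕ) < 2 * n) :
    ξ i ^ 2 ≤ zNormSq ξ := by
  by_cases h : (i : ℕ) < n
  · have hle : ξ (coordX n ⟨i, h⟩) ^ 2 + ξ (coordY n ⟨i, h⟩) ^ 2 ≤ zNormSq ξ :=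
      Finset.single_le_sum (f := fun j : Fin n => ξ (coordX n j) ^ 2 + ξ (coordY n j) ^ 2)
        (fun j _ => by positivity) (Finset.mem_univ _)
    have he : coordX n ⟨i, h⟩ = i := by
      apply Fin.ext; simp [coordX]
    rw [he] at hle
    nlinarith [sq_nonneg (ξ (coordY n ⟨i, h⟩))]
  · have h' : (i : ℕ) - n < n := by omega
    have hle : ξ (coordX n ⟨(i : ℕ) - n, h'⟩) ^ 2 + ξ (coordY n ⟨(i : ℕ) - n, h'⟩) ^ 2
        ≤ zNormSq ξ :=
      Finset.single_le_sum (f := fun j : Fin n => ξ (coordX n j) ^ 2 + ξ (coordY n j) ^ 2)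
        (fun j _ => by positivity) (Finset.mem_univ _)
    have he : coordY n ⟨(i : ℕ) - n, h'⟩ = i := by
      apply Fin.ext; simp [coordY]; omega
    rw [he] at hle
    nlinarith [sq_nonneg (ξ (coordX n ⟨(i : ℕ) - n, h'⟩))]

lemma abs_coord_le (ξ : H n) (i : Fin (2 * n + 1)) (hi : (i : ℕ) < 2 * n) :
    |ξ i| ≤ ρ ξ := by
  have h1 := (coord_sq_le ξ i hi).trans (zNormSq_le ξ)
  have hρ := rho_nonneg ξ
  nlinarith [sq_abs (ξ i), abs_nonneg (ξ i), sq_nonneg (|ξ i| + ρ ξ), sq_nonneg (|ξ i| - ρ ξ)]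

lemma rho_rpow_measurable (r : ℝ) : Measurable fun ξ : H n => ρ ξ ^ r := by
  unfold ρ zNormSq
  fun_prop

lemma rho_measurable : Measurable (ρ : H n → ℝ) := by
  unfold ρ zNormSq
  fun_prop

end Aux

/-- Finiteness of the singular weight integral near the origin. -/
lemma weight_finite (n : ℕ) (hn : 0 < n) (δ : ℝ) (hδ0 : 0 ≤ δ) (hδQ : δ < (Qdim n : ℝ)) :
    ∫⁻ ξ in {ξ : H n | ρ ξ ≤ 1}, ENNReal.ofReal (ρ ξ ^ (-δ)) ≠ ⊤ := by
  have hQpos : (0:ℝ) < (Qdim n : ℝ) := by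
    simp only [Qdim]; positivity
  set c : ℝ := δ / (Qdim n : ℝ) with hc
  have hc0 : 0 ≤ c := div_nonneg hδ0 hQpos.le
  have hc1 : c < 1 := (div_lt_one hQpos).2 hδQ
  set g : ℝ → ℝ := Set.indicator (Set.Icc (-1) 1) (fun τ => |τ| ^ (-c)) with hg
  have hgm : Measurable fun τ : ℝ => |τ| ^ (-c) := by fun_prop
  have hint_pos : IntegrableOn (fun τ : ℝ => |τ| ^ (-c)) (Set.Ioc 0 1) := by
    have h1 : IntervalIntegrable (fun τ : ℝ => τ ^ (-c)) volume 0 1 :=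
      intervalIntegral.intervalIntegrable_rpow' (by linarith)
    exact h1.1.congr_fun (fun τ hτ => by rw [abs_of_pos hτ.1]) measurableSet_Ioc
  have hint_neg : IntegrableOn (fun τ : ℝ => |τ| ^ (-c)) (Set.Icc (-1) 0) := by
    have m : MeasurableEmbedding fun x : ℝ => -x := (Homeomorph.neg ℝ).measurableEmbedding
    rw [← Measure.map_neg_eq_self (volume : Measure ℝ), m.integrableOn_map_iff]
    simp_rw [Function.comp_def, abs_neg, Set.neg_preimage, Set.neg_Icc, neg_zero, neg_neg]
    exact Iff.mpr integrableOn_Icc_iff_integrableOn_Ioc hint_pos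
  have hint : Integrable g := by
    rw [hg, integrable_indicator_iff measurableSet_Icc]
    have he : Set.Icc (-1:ℝ) 1 = Set.Icc (-1:ℝ) 0 ∪ Set.Ioc 0 1 :=
      (Set.Icc_union_Ioc_eq_Icc (by norm_num) (by norm_num)).symm
    rw [he]
    exact hint_neg.union hint_pos
  have hprod : Integrable (fun ξ : H n => ∏ i, g (ξ i)) :=
    Integrable.fintype_prod (𝕜 := ℝ) fun _ => hint
  have hae : ∀ᵐ ξ : H n, ∀ i, ξ i ≠ (0:ℝ) := by
    rw [ae_all_iff]
    intro i
    rw [volume_pi]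
    exact Measure.ae_eval_ne _ i 0
  have hAm : MeasurableSet {ξ : H n | ρ ξ ≤ 1} :=
    measurableSet_le rho_measurable measurable_const
  have hbound : ∀ᵐ ξ : H n, ξ ∈ {ξ : H n | ρ ξ ≤ 1} →
      ENNReal.ofReal (ρ ξ ^ (-δ)) ≤ ENNReal.ofReal (∏ i, g (ξ i)) := by
    filter_upwards [hae] with ξ hne hξ
    apply ENNReal.ofReal_le_ofReal
    have hρ1 : ρ ξ ≤ 1 := hξ
    have hρpos : 0 < ρ ξ := by
      have h0lt : ((⟨0, by omega⟩ : Fin (2 * n + 1)) : ℕ) < 2 * n := by simp; omega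
      have h1 := abs_coord_le ξ ⟨0, by omega⟩ h0lt
      have h2 := abs_pos.mpr (hne ⟨0, by omega⟩)
      linarith
    set b : Fin (2 * n + 1) → ℝ := fun i => if (i : ℕ) = 2 * n then ρ ξ ^ 2 else ρ ξ with hb
    have hble : ∀ i, |ξ i| ≤ b i := by
      intro i
      by_cases hi : (i : ℕ) = 2 * n
      · have hiT : i = coordT n := by apply Fin.ext; simpa [coordT] using hi
        rw [hiT]
        simpa [hb, coordT] using abs_t_le ξ
      · have hi' : (i : ℕ) < 2 * n := by have := i.isLt; omega
        simp only [hb, if_neg hi]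
        exact abs_coord_le ξ i hi'
    have hb1 : ∀ i, b i ≤ 1 := by
      intro i
      by_cases hi : (i : ℕ) = 2 * n <;> simp only [hb, hi, if_pos, if_neg, if_true, if_false]
      · nlinarith
      · simpa [hi] using hρ1
    have hgval : ∀ i, g (ξ i) = |ξ i| ^ (-c) := by
      intro i
      have hmem : ξ i ∈ Set.Icc (-1:ℝ) 1 := by
        have := (hble i).trans (hb1 i)
        constructor <;> [linarith [abs_le.mp this]; linarith [(abs_le.mp this).2]]
      rw [hg, Set.indicator_of_mem hmem]
    have hbpos : ∀ i, 0 < b i := by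
      intro i
      by_cases hi : (i : ℕ) = 2 * n <;> simp only [hb, if_pos, if_neg, hi, if_true, if_false]
      · positivity
      · simpa [hi] using hρpos
    have hstep : ∀ i : Fin (2 * n + 1), b i ^ (-c) ≤ |ξ i| ^ (-c) := fun i =>
      Real.rpow_le_rpow_of_nonpos (abs_pos.mpr (hne i)) (hble i) (neg_nonpos.mpr hc0)
    have hprodle : ∏ i, b i ^ (-c) ≤ ∏ i, |ξ i| ^ (-c) :=
      Finset.prod_le_prod (fun i _ => Real.rpow_nonneg (hbpos i).le _) fun i _ => hstep i
    have hprodb : ∏ i, b i ^ (-c) = ρ ξ ^ (-δ) := by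
      have h1 : ∏ i, b i ^ (-c) = (∏ i, b i) ^ (-c) := by
        rw [← Real.finset_prod_rpow _ _ (fun i _ => (hbpos i).le)]
      have h2 : ∏ i, b i = ρ ξ ^ (2 * n + 2 : ℕ) := by
        rw [← Finset.mul_prod_erase Finset.univ b (Finset.mem_univ (coordT n))]
        have hbT : b (coordT n) = ρ ξ ^ 2 := by simp [hb, coordT]
        have hrest : ∏ i ∈ Finset.univ.erase (coordT n), b i
            = ρ ξ ^ (2 * n : ℕ) := by
          rw [Finset.prod_congr rfl (fun i hi => ?_), Finset.prod_const]
          · congr 1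
            rw [Finset.card_erase_of_mem (Finset.mem_univ _), Finset.card_univ,
              Fintype.card_fin]
            omega
          · have hiT : i ≠ coordT n := (Finset.mem_erase.mp hi).1
            have : (i : ℕ) ≠ 2 * n := by
              intro hcontra
              exact hiT (by apply Fin.ext; simp [coordT, hcontra])
            simp [hb, this]
        rw [hbT, hrest]
        ring
      rw [h1, h2, ← Real.rpow_natCast (ρ ξ) (2 * n + 2), ← Real.rpow_mul hρpos.le]
      congr 1
      have : ((2 * n + 2 : ℕ) : ℝ) = (Qdim n : ℝ) := by simp [Qdim]
      rw [this, hc]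
      field_simp
    calc ρ ξ ^ (-δ) = ∏ i, b i ^ (-c) := hprodb.symm
      _ ≤ ∏ i, |ξ i| ^ (-c) := hprodle
      _ = ∏ i, g (ξ i) := by rw [Finset.prod_congr rfl fun i _ => (hgval i).symm]
  have hle : ∫⁻ ξ in {ξ : H n | ρ ξ ≤ 1}, ENNReal.ofReal (ρ ξ ^ (-δ))
      ≤ ∫⁻ ξ : H n, ENNReal.ofReal (∏ i, g (ξ i)) := by
    calc ∫⁻ ξ in {ξ : H n | ρ ξ ≤ 1}, ENNReal.ofReal (ρ ξ ^ (-δ))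
        ≤ ∫⁻ ξ in {ξ : H n | ρ ξ ≤ 1}, ENNReal.ofReal (∏ i, g (ξ i)) :=
          lintegral_mono_ae ((ae_restrict_iff' hAm).2 hbound)
      _ ≤ ∫⁻ ξ : H n, ENNReal.ofReal (∏ i, g (ξ i)) := setLIntegral_le_lintegral _ _
  exact ne_top_of_le_ne_top hprod.lintegral_lt_top.ne hle

/-- **Convergence of singular-weighted integrals** (display (3.7)): if `u_k → u` in every
`L^q(ℍⁿ)` with `Q ≤ q < ∞`, then `∫ |u_k − u|^s ρ(ξ)^{−β} dξ → 0` for every `s ∈ [Q, ∞)`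
and `0 ≤ β < Q`. -/

theorem weighted_Lp_convergence (n : ℕ) (hn : 0 < n) (β : ℝ) (hβ0 : 0 ≤ β)
    (hβQ : β < (Qdim n : ℝ)) (s : ℝ) (hs : (Qdim n : ℝ) ≤ s)
    (u : ℕ → H n → ℝ) (u₀ : H n → ℝ)
    (hmeas : ∀ k, AEMeasurable (u k) (volume : Measure (H n)))
    (hmem₀ : ∀ q : ℝ, (Qdim n : ℝ) ≤ q → MemLp u₀ (ENNReal.ofReal q) volume)
    (hconv : ∀ q : ℝ, (Qdim n : ℝ) ≤ q →
      Tendsto (fun k => eLpNorm (fun ξ => u k ξ - u₀ ξ) (ENNReal.ofReal q) volume)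
        atTop (𝓝 0)) :
    Tendsto (fun k => ∫⁻ ξ, ENNReal.ofReal (|u k ξ - u₀ ξ| ^ s / ρ ξ ^ β))
      atTop (𝓝 0) := by
  have hQpos : (0:ℝ) < (Qdim n : ℝ) := by simp only [Qdim]; positivity
  obtain ⟨Q, hQdef⟩ : ∃ x : ℝ, x = (Qdim n : ℝ) := ⟨_, rfl⟩
  rw [← hQdef] at hβQ hs hmem₀ hconv hQpos
  have hs0 : 0 < s := lt_of_lt_of_le hQpos hs
  -- conjugate exponents
  obtain ⟨q₀, hq₀⟩ : ∃ x : ℝ, x = 1 + (Q - β) / (2 * Q) := ⟨_, rfl⟩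
  have hq₀1 : 1 < q₀ := by
    have h : 0 < (Q - β) / (2 * Q) := div_pos (by linarith) (by linarith)
    rw [hq₀]; linarith
  have hq₀0 : 0 < q₀ := by linarith
  obtain ⟨p₀, hp₀⟩ : ∃ x : ℝ, x = q₀ / (q₀ - 1) := ⟨_, rfl⟩
  have hp₀1 : 1 < p₀ := by
    rw [hp₀, lt_div_iff₀ (by linarith)]
    linarith
  have hp₀0 : 0 < p₀ := by linarith
  have hpq : p₀.HolderConjugate q₀ := by
    rw [Real.holderConjugate_iff]
    constructor
    · exact hp₀1
    · rw [hp₀]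
      have h1 : q₀ - 1 ≠ 0 := by linarith
      field_simp
      ring
  have hδ0 : 0 ≤ β * q₀ := mul_nonneg hβ0 hq₀0.le
  have hδQ : β * q₀ < Q := by
    have e : β * q₀ = β + (β * (Q - β)) / (2 * Q) := by rw [hq₀]; ring
    have h1 : (β * (Q - β)) / (2 * Q) ≤ (Q - β) / 2 := by
      rw [div_le_div_iff₀ (by linarith) (by norm_num)]
      nlinarith
    linarith
  have hsp : Q ≤ s * p₀ := hs.trans (by nlinarith)
  -- notation
  set A : Set (H n) := {ξ : H n | ρ ξ ≤ 1} with hA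
  have hAm : MeasurableSet A := measurableSet_le rho_measurable measurable_const
  set φ : ℕ → H n → ℝ≥0∞ := fun k ξ => ENNReal.ofReal |u k ξ - u₀ ξ| with hφ
  have hvmeas : ∀ k, AEMeasurable (fun ξ => u k ξ - u₀ ξ) (volume : Measure (H n)) :=
    fun k => (hmeas k).sub (hmem₀ Q le_rfl).1.aemeasurable
  have hφmeas : ∀ k, AEMeasurable (φ k) (volume : Measure (H n)) := fun k =>
    ENNReal.measurable_ofReal.comp_aemeasurable
      (continuous_abs.measurable.comp_aemeasurable (hvmeas k))
  have hlp : ∀ (k : ℕ) (r : ℝ), Q ≤ r →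
      ∫⁻ ξ, φ k ξ ^ r = (eLpNorm (fun ξ => u k ξ - u₀ ξ) (ENNReal.ofReal r) volume) ^ r := by
    intro k r hr
    have hr0 : 0 < r := lt_of_lt_of_le hQpos hr
    rw [eLpNorm_eq_lintegral_rpow_enorm_toReal (by simpa using hr0) ENNReal.ofReal_ne_top,
      ENNReal.toReal_ofReal hr0.le, ← ENNReal.rpow_mul, one_div_mul_cancel hr0.ne',
      ENNReal.rpow_one]
    refine lintegral_congr fun ξ => ?_
    simp only [hφ, Real.enorm_eq_ofReal_abs]
  set N : ℕ → ℝ≥0∞ := fun k => eLpNorm (fun ξ => u k ξ - u₀ ξ) (ENNReal.ofReal s) volume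
    with hN
  set M : ℕ → ℝ≥0∞ := fun k =>
    eLpNorm (fun ξ => u k ξ - u₀ ξ) (ENNReal.ofReal (s * p₀)) volume with hM
  have hC := weight_finite n hn (β * q₀) hδ0 (hQdef ▸ hδQ)
  set K : ℝ≥0∞ := (∫⁻ ξ in A, ENNReal.ofReal (ρ ξ ^ (-(β * q₀)))) ^ (1 / q₀) with hK
  have hKne : K ≠ ⊤ := ENNReal.rpow_ne_top_of_nonneg (by positivity) hC
  -- main bound
  have hmain : ∀ k, (∫⁻ ξ, ENNReal.ofReal (|u k ξ - u₀ ξ| ^ s / ρ ξ ^ β))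
      ≤ N k ^ s + M k ^ s * K := by
    intro k
    rw [← lintegral_add_compl (fun ξ => ENNReal.ofReal (|u k ξ - u₀ ξ| ^ s / ρ ξ ^ β)) hAm]
    have hout : ∫⁻ ξ in Aᶜ, ENNReal.ofReal (|u k ξ - u₀ ξ| ^ s / ρ ξ ^ β) ≤ N k ^ s := by
      calc ∫⁻ ξ in Aᶜ, ENNReal.ofReal (|u k ξ - u₀ ξ| ^ s / ρ ξ ^ β)
          ≤ ∫⁻ ξ in Aᶜ, φ k ξ ^ s := by
            refine lintegral_mono_ae ((ae_restrict_iff' hAm.compl).2 (ae_of_all _ ?_))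
            intro ξ hξ
            have h1ρ : (1:ℝ) ≤ ρ ξ := le_of_lt (lt_of_not_ge hξ)
            have hdiv : |u k ξ - u₀ ξ| ^ s / ρ ξ ^ β ≤ |u k ξ - u₀ ξ| ^ s :=
              div_le_self (by positivity) (Real.one_le_rpow h1ρ hβ0)
            calc ENNReal.ofReal (|u k ξ - u₀ ξ| ^ s / ρ ξ ^ β)
                ≤ ENNReal.ofReal (|u k ξ - u₀ ξ| ^ s) := ENNReal.ofReal_le_ofReal hdiv
              _ = φ k ξ ^ s := (ENNReal.ofReal_rpow_of_nonneg (abs_nonneg _) hs0.le).symm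
        _ ≤ ∫⁻ ξ, φ k ξ ^ s := setLIntegral_le_lintegral _ _
        _ = N k ^ s := hlp k s hs
    have hin : ∫⁻ ξ in A, ENNReal.ofReal (|u k ξ - u₀ ξ| ^ s / ρ ξ ^ β) ≤ M k ^ s * K := by
      set F : H n → ℝ≥0∞ := fun ξ => φ k ξ ^ s with hF
      set W : H n → ℝ≥0∞ := fun ξ => ENNReal.ofReal (ρ ξ ^ (-β)) with hW
      have hpt : ∀ ξ, ENNReal.ofReal (|u k ξ - u₀ ξ| ^ s / ρ ξ ^ β) ≤ (F * W) ξ := by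
        intro ξ
        simp only [hF, hW, hφ, Pi.mul_apply]
        rcases eq_or_lt_of_le (rho_nonneg ξ) with h0 | hpos
        · rcases eq_or_lt_of_le hβ0 with hb0 | hb
          · rw [← hb0]
            simp only [Real.rpow_zero, neg_zero, div_one, ENNReal.ofReal_one, mul_one]
            exact le_of_eq (ENNReal.ofReal_rpow_of_nonneg (abs_nonneg _) hs0.le).symm
          · rw [← h0, Real.zero_rpow (ne_of_gt hb), div_zero]
            simp
        · rw [Real.rpow_neg (le_of_lt hpos), div_eq_mul_inv,
            ENNReal.ofReal_mul (by positivity),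
            ← ENNReal.ofReal_rpow_of_nonneg (abs_nonneg _) hs0.le]
      have hφs : AEMeasurable F ((volume : Measure (H n)).restrict A) :=
        (ENNReal.continuous_rpow_const.measurable.comp_aemeasurable
          (hφmeas k).restrict)
      have hWs : AEMeasurable W ((volume : Measure (H n)).restrict A) :=
        ((rho_rpow_measurable (-β)).ennreal_ofReal).aemeasurable
      calc ∫⁻ ξ in A, ENNReal.ofReal (|u k ξ - u₀ ξ| ^ s / ρ ξ ^ β)
          ≤ ∫⁻ ξ in A, (F * W) ξ := lintegral_mono hpt
        _ ≤ (∫⁻ ξ in A, F ξ ^ p₀) ^ (1 / p₀) * (∫⁻ ξ in A, W ξ ^ q₀) ^ (1 / q₀) :=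
            ENNReal.lintegral_mul_le_Lp_mul_Lq _ hpq hφs hWs
        _ ≤ M k ^ s * K := by
            refine mul_le_mul' ?_ (le_of_eq ?_)
            · have h2 : (∫⁻ ξ in A, F ξ ^ p₀) ≤ M k ^ (s * p₀) := by
                calc (∫⁻ ξ in A, F ξ ^ p₀) = ∫⁻ ξ in A, φ k ξ ^ (s * p₀) := by
                      refine lintegral_congr fun ξ => ?_
                      simp only [hF]
                      rw [← ENNReal.rpow_mul]
                  _ ≤ ∫⁻ ξ, φ k ξ ^ (s * p₀) := setLIntegral_le_lintegral _ _
                  _ = M k ^ (s * p₀) := hlp k (s * p₀) hsp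
              calc (∫⁻ ξ in A, F ξ ^ p₀) ^ (1 / p₀)
                  ≤ (M k ^ (s * p₀)) ^ (1 / p₀) :=
                    ENNReal.rpow_le_rpow h2 (by positivity)
                _ = M k ^ s := by
                    rw [← ENNReal.rpow_mul]
                    congr 1
                    field_simp
            · rw [hK]
              congr 1
              refine lintegral_congr fun ξ => ?_
              simp only [hW]
              rw [ENNReal.ofReal_rpow_of_nonneg (Real.rpow_nonneg (rho_nonneg ξ) _) hq₀0.le,
                ← Real.rpow_mul (rho_nonneg ξ), neg_mul]
    calc (∫⁻ ξ in A, ENNReal.ofReal (|u k ξ - u₀ ξ| ^ s / ρ ξ ^ β)) +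
          ∫⁻ ξ in Aᶜ, ENNReal.ofReal (|u k ξ - u₀ ξ| ^ s / ρ ξ ^ β)
        ≤ M k ^ s * K + N k ^ s := add_le_add hin hout
      _ = N k ^ s + M k ^ s * K := add_comm _ _
  -- convergence of the bounds
  have hNconv : Tendsto (fun k => N k ^ s) atTop (𝓝 0) := by
    have h1 := (ENNReal.continuous_rpow_const (y := s)).continuousAt.tendsto.comp
      (hconv s hs)
    simpa [Function.comp_def, ENNReal.zero_rpow_of_pos hs0] using h1
  have hMconv : Tendsto (fun k => M k ^ s) atTop (𝓝 0) := by
    have h1 := (ENNReal.continuous_rpow_const (y := s)).continuousAt.tendsto.comp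
      (hconv (s * p₀) hsp)
    simpa [Function.comp_def, ENNReal.zero_rpow_of_pos hs0] using h1
  have hMK : Tendsto (fun k => M k ^ s * K) atTop (𝓝 0) := by
    have := ENNReal.Tendsto.mul_const hMconv (Or.inr hKne)
    simpa using this
  have hsum : Tendsto (fun k => N k ^ s + M k ^ s * K) atTop (𝓝 0) := by
    simpa using hNconv.add hMK
  exact tendsto_of_tendsto_of_tendsto_of_le_of_le tendsto_const_nhds hsum
    (fun k => zero_le) hmain

end Heisenberg
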